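/- Let α be a continuous ‖·‖₁-dominating normalized gauge norm on L^∞(𝕋). On the closed unit ball 𝔹 = {f ∈ L^∞ : ‖f‖_∞ ≤ 1}, the topology induced by α coincides with the topology induced by ‖·‖₂ (both coincide with convergence in measure). -/

import Mathlib

open MeasureTheory Complex Filter Topology Set ENNReal NNReal

noncomputable section

instance : Fact ((0:ℝ) < 1) := ⟨one_pos⟩

/-- The unit circle, modelled as `ℝ/ℤ`, with normalized Haar (arc-length) measure. -/
abbrev T1 : Type := AddCircle (1 : ℝ)

/-- Normalized Haar measure on the circle. -/
abbrev hm : Measure T1 := volume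

/-- The identity function `z` on the circle, as a complex-valued function. -/
def ztor : T1 → ℂ := fun t => fourier 1 t

/-- A `‖·‖₁`-dominating normalized gauge norm: a norm on `L^∞(𝕋)` with `α(1)=1`,
`α(|f|)=α(f)`, `α(f) ≥ ‖f‖₁`, extended to all measurable functions by
`α(f) = sup{α(s) : s simple, 0 ≤ s ≤ |f|}`.  Values are in `ℝ≥0∞`. -/
structure GaugeNorm where
  toFun : (T1 → ℂ) → ℝ≥0∞
  ae_congr' : ∀ f g : T1 → ℂ, f =ᵐ[hm] g → toFun f = toFun g
  add_le' : ∀ f g : T1 → ℂ, toFun (f + g) ≤ toFun f + toFun g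
  smul' : ∀ (c : ℂ) (f : T1 → ℂ), toFun (c • f) = ‖c‖₊ * toFun f
  norm_one' : toFun 1 = 1
  abs' : ∀ f : T1 → ℂ, toFun (fun x => ((‖f x‖ : ℝ) : ℂ)) = toFun f
  dominating' : ∀ f : T1 → ℂ, MemLp f ⊤ hm → eLpNorm f 1 hm ≤ toFun f
  ext_simple' : ∀ f : T1 → ℂ, AEMeasurable f hm →
    toFun f = ⨆ (s : MeasureTheory.SimpleFunc T1 ℝ)
        (_ : ∀ x, 0 ≤ s x ∧ s x ≤ ‖f x‖),
      toFun (fun x => (s x : ℂ))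

/-- Continuity of a gauge norm: `α(χ_E) → 0` as `m(E) → 0⁺`. -/
def GaugeNorm.IsCont (α : GaugeNorm) : Prop :=
  ∀ ε : ℝ≥0∞, 0 < ε → ∃ δ : ℝ≥0∞, 0 < δ ∧ ∀ E : Set T1, MeasurableSet E →
    hm E < δ → α.toFun (E.indicator 1) < ε

/-- Membership in `L^∞(𝕋)`. -/
def MemLinf (f : T1 → ℂ) : Prop := MemLp f ⊤ hm

/-- Membership in `H^∞`: bounded with vanishing negative Fourier coefficients. -/
def MemHinf (f : T1 → ℂ) : Prop :=
  MemLp f ⊤ hm ∧ ∀ n : ℤ, n < 0 → fourierCoeff f n = 0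

/-- Membership in the Hardy space `H¹`. -/
def MemH1 (f : T1 → ℂ) : Prop :=
  MemLp f 1 hm ∧ ∀ n : ℤ, n < 0 → fourierCoeff f n = 0

/-- Membership in `𝓛^α = {f : α(f) < ∞}`. -/
def GaugeNorm.MemLBig (α : GaugeNorm) (f : T1 → ℂ) : Prop :=
  AEMeasurable f hm ∧ α.toFun f < ⊤

/-- Membership in `L^α`, the `α`-closure of `L^∞` in `𝓛^α`. -/
def GaugeNorm.MemL (α : GaugeNorm) (f : T1 → ℂ) : Prop :=
  α.MemLBig f ∧ ∀ ε : ℝ≥0∞, 0 < ε → ∃ g, MemLinf g ∧ α.toFun (f - g) < ε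

/-- Membership in `H^α`, the `α`-closure of `H^∞`. -/
def GaugeNorm.MemH (α : GaugeNorm) (f : T1 → ℂ) : Prop :=
  α.MemLBig f ∧ ∀ ε : ℝ≥0∞, 0 < ε → ∃ g, MemHinf g ∧ α.toFun (f - g) < ε

/-- `W` is a linear subspace (of functions). -/
def IsSubspace (W : Set (T1 → ℂ)) : Prop :=
  0 ∈ W ∧ (∀ f g, f ∈ W → g ∈ W → f + g ∈ W) ∧ ∀ (c : ℂ) f, f ∈ W → c • f ∈ W

/-- `zW ⊆ W` (up to a.e. equality). -/
def ZInvariant (W : Set (T1 → ℂ)) : Prop :=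
  ∀ f ∈ W, ∃ g ∈ W, g =ᵐ[hm] fun x => ztor x * f x

/-- `W` is `α`-closed (in `L^α`). -/
def GaugeNorm.ClosedSet (α : GaugeNorm) (W : Set (T1 → ℂ)) : Prop :=
  ∀ f, α.MemL f → (∀ ε : ℝ≥0∞, 0 < ε → ∃ g ∈ W, α.toFun (f - g) < ε) →
    ∃ g ∈ W, f =ᵐ[hm] g

/-- `M` is weak*-closed in `L^∞ = (L¹)^*`: every `f ∈ L^∞` all of whose basic
weak* neighborhoods meet `M` is (a.e. equal to an element) in `M`. -/
def IsWeakStarClosed (M : Set (T1 → ℂ)) : Prop :=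
  ∀ f, MemLinf f →
    (∀ ε : ℝ, 0 < ε → ∀ S : Finset (T1 → ℂ), (∀ h ∈ S, Integrable h hm) →
      ∃ g ∈ M, ∀ h ∈ S, ‖∫ x, (g x - f x) * h x ∂hm‖ < ε) →
    ∃ g ∈ M, f =ᵐ[hm] g

/-- The dual norm `α′(f) = sup{∫|fh|dm : h ∈ L^∞, α(h) ≤ 1}`. -/
def GaugeNorm.dual (α : GaugeNorm) (f : T1 → ℂ) : ℝ≥0∞ :=
  ⨆ (h : T1 → ℂ) (_ : MemLinf h ∧ α.toFun h ≤ 1),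
    ∫⁻ x, (‖f x * h x‖₊ : ℝ≥0∞) ∂hm

/-- `W` is saturated under a.e. equality (within `L^α`). -/
def GaugeNorm.AESaturated (α : GaugeNorm) (W : Set (T1 → ℂ)) : Prop :=
  ∀ f g, f ∈ W → g =ᵐ[hm] f → α.MemL g → g ∈ W

/-! On the ball both topologies agree with the `‖·‖₁`-topology. Write `g = F n - f`, so
`‖g‖_∞ ≤ 2`. On one side `‖g‖₁ ≤ α(g)` and `‖g‖₂² ≤ ‖g‖_∞ ‖g‖₁ ≤ 2‖g‖₁`. On the other side
`‖g‖₁ ≤ ‖g‖₂`, and splitting `g` at a height `t` gives `α(g) ≤ 2 α(χ_E) + t` with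
`E = {|g| ≥ t}`; Chebyshev's inequality `m(E) ≤ ‖g‖₁ / t` and the continuity of `α` make
`α(χ_E)` small. -/

instance : IsProbabilityMeasure hm := ⟨by simp [AddCircle.measure_univ]⟩

section Interpolation

variable {X E ι : Type*} [MeasurableSpace X] [NormedAddCommGroup E] {μ : Measure X}

lemma eLpNorm_two_rpow_le_eLpNorm_top_mul_eLpNorm_one {g : X → E}
    (hg : AEStronglyMeasurable g μ) :
    eLpNorm g 2 μ ^ (2 : ℝ) ≤ eLpNorm g ∞ μ * eLpNorm g 1 μ := by
  have hsq : eLpNorm (fun x => ‖g x‖ ^ (2 : ℝ)) 1 μ = eLpNorm g 2 μ ^ (2 : ℝ) := by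
    simpa using eLpNorm_norm_rpow (p := 1) (μ := μ) g two_pos
  have hholder := eLpNorm_le_eLpNorm_top_mul_eLpNorm 1 g hg (fun a b => ‖a‖ * ‖b‖) 1
    (Eventually.of_forall fun x => by simp)
  simp only [ENNReal.coe_one, one_mul] at hholder
  rwa [← hsq, funext fun x => Real.rpow_two ‖g x‖, funext fun x => sq ‖g x‖]

lemma tendsto_eLpNorm_two_of_tendsto_eLpNorm_one {l : Filter ι} {g : ι → X → E} {M : ℝ≥0∞}
    (hM : M ≠ ∞) (hg : ∀ i, AEStronglyMeasurable (g i) μ) (hbdd : ∀ i, eLpNorm (g i) ∞ μ ≤ M)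
    (h1 : Tendsto (fun i => eLpNorm (g i) 1 μ) l (𝓝 0)) :
    Tendsto (fun i => eLpNorm (g i) 2 μ) l (𝓝 0) := by
  have hsq : Tendsto (fun i => eLpNorm (g i) 2 μ ^ (2 : ℝ)) l (𝓝 0) := by
    have hM1 : Tendsto (fun i => M * eLpNorm (g i) 1 μ) l (𝓝 0) := by
      simpa using ENNReal.Tendsto.const_mul h1 (Or.inr hM)
    refine tendsto_of_tendsto_of_tendsto_of_le_of_le tendsto_const_nhds hM1 (fun _ => zero_le)
      fun i => ?_
    exact (eLpNorm_two_rpow_le_eLpNorm_top_mul_eLpNorm_one (hg i)).trans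
      (mul_le_mul_left (hbdd i) _)
  have hroot := ((ENNReal.continuous_rpow_const (y := (2 : ℝ)⁻¹)).tendsto 0).comp hsq
  rwa [ENNReal.zero_rpow_of_pos (by norm_num), Function.comp_def,
    funext fun i => ENNReal.rpow_rpow_inv two_ne_zero (eLpNorm (g i) 2 μ)] at hroot

end Interpolation

namespace GaugeNorm

variable (α : GaugeNorm)

lemma mono {f g : T1 → ℂ} (hf : AEMeasurable f hm) (hg : AEMeasurable g hm)
    (h : ∀ x, ‖f x‖ ≤ ‖g x‖) : α.toFun f ≤ α.toFun g := by
  rw [α.ext_simple' f hf, α.ext_simple' g hg]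
  exact iSup₂_le fun s hs =>
    le_iSup₂_of_le s (fun x => ⟨(hs x).1, (hs x).2.trans (h x)⟩) le_rfl

lemma mono_ae {f g : T1 → ℂ} (hf : AEMeasurable f hm) (hg : AEMeasurable g hm)
    (h : ∀ᵐ x ∂hm, ‖f x‖ ≤ ‖g x‖) : α.toFun f ≤ α.toFun g := by
  obtain ⟨f₀, hf₀m, hf₀⟩ := hf
  obtain ⟨g₀, hg₀m, hg₀⟩ := hg
  -- a measurable version of `g` that dominates `f₀` everywhere
  set g₁ : T1 → ℂ := fun x => if ‖f₀ x‖ ≤ ‖g₀ x‖ then g₀ x else f₀ x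
  have hg₁ : g₁ =ᵐ[hm] g := by
    filter_upwards [h, hf₀, hg₀] with x hx hfx hgx
    simp only [g₁, ← hfx, ← hgx, hx, if_true]
  have hg₁m : Measurable g₁ :=
    Measurable.ite (measurableSet_le hf₀m.norm hg₀m.norm) hg₀m hf₀m
  rw [α.ae_congr' _ _ hf₀, ← α.ae_congr' _ _ hg₁]
  refine α.mono hf₀m.aemeasurable hg₁m.aemeasurable fun x => ?_
  by_cases hx : ‖f₀ x‖ ≤ ‖g₀ x‖ <;> simp [g₁, hx]

lemma const_smul_one (c : ℂ) : α.toFun (c • 1) = ‖c‖₊ := by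
  rw [α.smul', α.norm_one', mul_one]

lemma le_mul_indicator_add {g : T1 → ℂ} (hg : Measurable g) {M : ℝ≥0}
    (hM : ∀ᵐ x ∂hm, ‖g x‖ₑ ≤ M) (t : ℝ≥0) :
    α.toFun g ≤ M * α.toFun ({x | (t : ℝ≥0∞) ≤ ‖g x‖ₑ}.indicator 1) + t := by
  set E := {x | (t : ℝ≥0∞) ≤ ‖g x‖ₑ}
  have hE : MeasurableSet E := measurableSet_le measurable_const hg.enorm
  have hlarge : α.toFun (E.indicator g) ≤ α.toFun ((M : ℂ) • E.indicator 1) := by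
    refine α.mono_ae (hg.indicator hE).aemeasurable
      ((measurable_one.indicator hE).const_smul _).aemeasurable ?_
    filter_upwards [hM] with x hx
    by_cases hxE : x ∈ E
    · simpa [hxE] using NNReal.coe_le_coe.mpr (enorm_le_coe.mp hx)
    · simp [hxE]
  have hsmall : α.toFun (Eᶜ.indicator g) ≤ α.toFun ((t : ℂ) • 1) := by
    refine α.mono (hg.indicator hE.compl).aemeasurable
      (measurable_const.const_smul _).aemeasurable fun x => ?_
    by_cases hxE : x ∈ E
    · simp [hxE]
    · simpa [hxE] using NNReal.coe_le_coe.mpr (enorm_le_coe.mp (not_le.mp hxE).le)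
  calc α.toFun g = α.toFun (E.indicator g + Eᶜ.indicator g) := by
        rw [indicator_self_add_compl]
    _ ≤ α.toFun (E.indicator g) + α.toFun (Eᶜ.indicator g) := α.add_le' _ _
    _ ≤ α.toFun ((M : ℂ) • E.indicator 1) + α.toFun ((t : ℂ) • 1) := add_le_add hlarge hsmall
    _ = M * α.toFun (E.indicator 1) + t := by
        rw [α.smul', α.const_smul_one]
        simp

lemma tendsto_zero_of_tendsto_eLpNorm_one (hc : α.IsCont) {ι : Type*} {l : Filter ι}
    {g : ι → T1 → ℂ} {M : ℝ≥0} (hg : ∀ i, AEStronglyMeasurable (g i) hm)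
    (hbdd : ∀ i, eLpNorm (g i) ∞ hm ≤ M) (h1 : Tendsto (fun i => eLpNorm (g i) 1 hm) l (𝓝 0)) :
    Tendsto (fun i => α.toFun (g i)) l (𝓝 0) := by
  refine ENNReal.tendsto_nhds_zero.2 fun ε hε => ?_
  have hε2 : ε / 2 ≠ 0 := (ENNReal.half_pos hε.ne').ne'
  obtain ⟨t, ht, htε⟩ := ENNReal.lt_iff_exists_nnreal_btwn.1 (pos_iff_ne_zero.2 hε2)
  obtain ⟨δ, hδ, hδα⟩ := hc (ε / 2 / M) (ENNReal.div_pos hε2 ENNReal.coe_ne_top)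
  have hcheb : Tendsto (fun i => (t : ℝ≥0∞)⁻¹ * eLpNorm (g i) 1 hm) l (𝓝 0) := by
    simpa using ENNReal.Tendsto.const_mul h1 (Or.inr (ENNReal.inv_ne_top.2 ht.ne'))
  filter_upwards [hcheb.eventually_lt_const hδ] with i hi
  obtain ⟨g₀, hg₀m, hg₀⟩ := (hg i).aemeasurable
  have hE : hm {x | (t : ℝ≥0∞) ≤ ‖g₀ x‖ₑ} < δ := calc
    _ ≤ (t : ℝ≥0∞)⁻¹ ^ (1 : ℝ≥0∞).toReal * eLpNorm g₀ 1 hm ^ (1 : ℝ≥0∞).toReal :=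
        meas_ge_le_mul_pow_eLpNorm_enorm hm one_ne_zero ENNReal.one_ne_top
          hg₀m.aestronglyMeasurable ht.ne' (by simp)
    _ = (t : ℝ≥0∞)⁻¹ * eLpNorm (g i) 1 hm := by simp [eLpNorm_congr_ae hg₀]
    _ < δ := hi
  have hg₀M : ∀ᵐ x ∂hm, ‖g₀ x‖ₑ ≤ M := by
    filter_upwards [ae_le_eLpNormEssSup (f := g i) (μ := hm), hg₀] with x hx hx₀
    rw [← hx₀]
    exact hx.trans (eLpNorm_exponent_top.symm.trans_le (hbdd i))
  have hEm : MeasurableSet {x | (t : ℝ≥0∞) ≤ ‖g₀ x‖ₑ} :=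
    measurableSet_le measurable_const hg₀m.enorm
  calc α.toFun (g i) = α.toFun g₀ := α.ae_congr' _ _ hg₀
    _ ≤ M * α.toFun ({x | (t : ℝ≥0∞) ≤ ‖g₀ x‖ₑ}.indicator 1) + t :=
        α.le_mul_indicator_add hg₀m hg₀M t
    _ ≤ M * (ε / 2 / M) + ε / 2 :=
        add_le_add (mul_le_mul_right (hδα _ hEm hE).le _) htε.le
    _ ≤ ε / 2 + ε / 2 := add_le_add_left ENNReal.mul_div_le _
    _ = ε := ENNReal.add_halves ε

end GaugeNorm

/-- on the closed unit ball `𝔹` of `L^∞`, the `α`-topology and the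
`‖·‖₂`-topology coincide. -/
theorem stmt9 (α : GaugeNorm) (hc : α.IsCont)
    (f : T1 → ℂ) (F : ℕ → T1 → ℂ)
    (hf : MemLinf f ∧ eLpNorm f ⊤ hm ≤ 1)
    (hF : ∀ n, MemLinf (F n) ∧ eLpNorm (F n) ⊤ hm ≤ 1) :
    Tendsto (fun n => α.toFun (F n - f)) atTop (𝓝 0) ↔
      Tendsto (fun n => eLpNorm (F n - f) 2 hm) atTop (𝓝 0) := by
  have hmeas : ∀ n, AEStronglyMeasurable (F n - f) hm := fun n => (hF n).1.1.sub hf.1.1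
  have hbdd : ∀ n, eLpNorm (F n - f) ∞ hm ≤ (2 : ℝ≥0) := fun n => calc
    eLpNorm (F n - f) ∞ hm ≤ eLpNorm (F n) ∞ hm + eLpNorm f ∞ hm :=
        eLpNorm_sub_le (hF n).1.1 hf.1.1 le_top
    _ ≤ 1 + 1 := add_le_add (hF n).2 hf.2
    _ = (2 : ℝ≥0) := by norm_num
  constructor
  · intro hα
    refine tendsto_eLpNorm_two_of_tendsto_eLpNorm_one ENNReal.coe_ne_top hmeas hbdd ?_
    exact tendsto_of_tendsto_of_tendsto_of_le_of_le tendsto_const_nhds hα (fun _ => zero_le)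
      fun n => α.dominating' _ ((hF n).1.sub hf.1)
  · intro h2
    refine α.tendsto_zero_of_tendsto_eLpNorm_one hc hmeas hbdd ?_
    exact tendsto_of_tendsto_of_tendsto_of_le_of_le tendsto_const_nhds h2 (fun _ => zero_le)
      fun n => eLpNorm_le_eLpNorm_of_exponent_le one_le_two (hmeas n)
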